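/- arXiv:1705.04653 — 3 statements merged into one kernel-verified Lean document; each statement's English description precedes it below -/
import Mathlib

section
/- Let A be a symmetric 2×2 positive definite matrix and B a symmetric 2×2 positive semidefinite matrix. Then B:A = 2·√(det A · det B) if and only if B = c·A⁻¹ for some scalar c ≥ 0. -/
/-!
Conjugating by `S = √A` turns `B` into the positive semidefinite matrix `N = S B S`, with
`tr N = B:A` and `det N = det A · det B`. For a symmetric `2 × 2` matrix the discriminant
`(tr N)² - 4 det N = (N₀₀ - N₁₁)² + 4 N₀₁²` is a sum of squares, so equality forces `N = c • 1`,
that is `B = c • A⁻¹`.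
-/

open Matrix

def frob (B A : Matrix (Fin 2) (Fin 2) ℝ) : ℝ := (B * A).trace

namespace Matrix

lemma IsSymm.trace_sq_sub_four_mul_det_fin_two {R : Type*} [CommRing R]
    {N : Matrix (Fin 2) (Fin 2) R} (hN : N.IsSymm) :
    N.trace ^ 2 - 4 * N.det = (N 0 0 - N 1 1) ^ 2 + 4 * N 0 1 ^ 2 := by
  rw [trace_fin_two, det_fin_two, hN.apply 0 1]
  ring

lemma IsSymm.eq_smul_one_of_trace_sq_eq_four_mul_det {R : Type*} [Field R] [LinearOrder R]
    [IsStrictOrderedRing R] {N : Matrix (Fin 2) (Fin 2) R} (hN : N.IsSymm)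
    (h : N.trace ^ 2 = 4 * N.det) : N = (N.trace / 2) • 1 := by
  have hsq : (N 0 0 - N 1 1) ^ 2 + 4 * N 0 1 ^ 2 = 0 := by
    rw [← hN.trace_sq_sub_four_mul_det_fin_two, h, sub_self]
  have hdiag : N 0 0 = N 1 1 := by nlinarith [sq_nonneg (N 0 0 - N 1 1), sq_nonneg (N 0 1)]
  have hoff : N 0 1 = 0 := by nlinarith [sq_nonneg (N 0 0 - N 1 1), sq_nonneg (N 0 1)]
  have hoff' : N 1 0 = 0 := (hN.apply 0 1).trans hoff
  ext i j
  fin_cases i <;> fin_cases j <;> simp [trace_fin_two, hdiag, hoff, hoff']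

lemma eq_smul_inv_mul_self_of_mul_mul_eq_smul_one {n R : Type*} [Fintype n] [DecidableEq n]
    [CommRing R] {S B : Matrix n n R} {c : R} (hS : IsUnit S.det) (h : S * B * S = c • 1) :
    B = c • (S * S)⁻¹ :=
  calc B = S⁻¹ * (S * B * S) * S⁻¹ := by
        rw [← mul_assoc S⁻¹, mul_nonsing_inv_cancel_right _ _ hS,
          nonsing_inv_mul_cancel_left _ _ hS]
    _ = c • (S * S)⁻¹ := by rw [h, mul_inv_rev, Matrix.mul_smul, mul_one, smul_mul]

open scoped MatrixOrder ComplexOrder in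
lemma PosSemidef.exists_isHermitian_mul_self_eq {n 𝕜 : Type*} [Fintype n] [DecidableEq n]
    [RCLike 𝕜] {A : Matrix n n 𝕜} (hA : A.PosSemidef) :
    ∃ S : Matrix n n 𝕜, S.IsHermitian ∧ S * S = A :=
  ⟨CFC.sqrt A, (CFC.sqrt_nonneg A).posSemidef.isHermitian, CFC.sqrt_mul_sqrt_self A hA.nonneg⟩

end Matrix

lemma frob_smul_inv {A : Matrix (Fin 2) (Fin 2) ℝ} (hA : IsUnit A.det) (c : ℝ) :
    frob (c • A⁻¹) A = 2 * c := by
  rw [frob, smul_mul, nonsing_inv_mul _ hA, trace_smul, trace_one, Fintype.card_fin]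
  norm_num [mul_comm]

theorem stmt3 (A B : Matrix (Fin 2) (Fin 2) ℝ)
    (hA : A.PosDef) (hB : B.PosSemidef) :
    frob B A = 2 * Real.sqrt (A.det * B.det) ↔ ∃ c : ℝ, 0 ≤ c ∧ B = c • A⁻¹ := by
  have hAdet : 0 < A.det := hA.det_pos
  constructor
  · intro h
    obtain ⟨S, hSh, rfl⟩ := hA.posSemidef.exists_isHermitian_mul_self_eq
    have hN : (S * B * S).PosSemidef := by
      simpa only [hSh.eq] using hB.mul_mul_conjTranspose_same S
    have htr : (S * B * S).trace = frob B (S * S) := by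
      rw [frob, ← mul_assoc, trace_mul_cycle B]
    have hdet : (S * B * S).det = (S * S).det * B.det := by
      simp only [det_mul]
      ring
    have hS : IsUnit S.det := isUnit_of_mul_isUnit_left (det_mul S S ▸ hAdet.ne'.isUnit)
    refine ⟨(S * B * S).trace / 2, by linarith [hN.trace_nonneg],
      eq_smul_inv_mul_self_of_mul_mul_eq_smul_one hS ?_⟩
    refine (isHermitian_iff_isSymm.mp hN.isHermitian).eq_smul_one_of_trace_sq_eq_four_mul_det ?_
    rw [htr, h, hdet, mul_pow, Real.sq_sqrt (mul_nonneg hAdet.le hB.det_nonneg)]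
    ring
  · rintro ⟨c, hc, rfl⟩
    rw [frob_smul_inv hAdet.ne'.isUnit, det_smul, det_nonsing_inv, Fintype.card_fin,
      Ring.inverse_eq_inv', mul_left_comm, mul_inv_cancel₀ hAdet.ne', mul_one, Real.sqrt_sq hc]
end

section
/- Let A be a symmetric 2×2 matrix and f ≥ 0. Then H(A,f) = 0 if and only if A is positive semidefinite and det A = (f/2)². -/
open Matrix

noncomputable section

def S1 : Set (Matrix (Fin 2) (Fin 2) ℝ) :=
  {B | B.PosSemidef ∧ B.trace = 1}

noncomputable def Hop (A : Matrix (Fin 2) (Fin 2) ℝ) (f : ℝ) : ℝ :=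
  sSup ((fun B => -frob B A + f * Real.sqrt B.det) '' S1)

/-! Write `B ∈ S1` as `!![1/2 + x, y; y, 1/2 - x]` with `x² + y² ≤ 1/4`. Then `√(det B)` is the
height `z ≥ 0` of `(x, y)` over the sphere of radius `1/2`, and `-B:A + f √(det B)` is an affine
function of `(x, y, z)`. Cauchy–Schwarz on the upper hemisphere gives the closed form
`H(A, f) = (√(tr² A - 4 det A + f²) - tr A) / 2`, which vanishes exactly when `tr A ≥ 0` and
`det A = (f/2)²`; for a symmetric `2 × 2` matrix these say that `A` is positive semidefinite. -/

lemma Matrix.IsHermitian.apply_one_zero {M : Matrix (Fin 2) (Fin 2) ℝ} (hM : M.IsHermitian) :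
    M 1 0 = M 0 1 := by
  simpa using hM.apply 0 1

lemma Matrix.isHermitian_fin_two_of (a b c : ℝ) :
    (!![a, b; b, c] : Matrix (Fin 2) (Fin 2) ℝ).IsHermitian := by
  ext i j
  fin_cases i <;> fin_cases j <;> rfl

lemma Matrix.posSemidef_fin_two_iff {M : Matrix (Fin 2) (Fin 2) ℝ} (hM : M.IsHermitian) :
    M.PosSemidef ↔ 0 ≤ M.trace ∧ 0 ≤ M.det := by
  refine ⟨fun h => ⟨h.trace_nonneg, h.det_nonneg⟩, fun ⟨htr, hdet⟩ => ?_⟩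
  rw [trace_fin_two] at htr
  rw [det_fin_two, hM.apply_one_zero] at hdet
  have h0 : 0 ≤ M 0 0 := by nlinarith [sq_nonneg (M 0 1)]
  refine .of_dotProduct_mulVec_nonneg hM fun v => ?_
  simp only [dotProduct, mulVec, Fin.sum_univ_two, star_trivial, hM.apply_one_zero]
  -- `M₀₀ · vᵀMv = (M₀₀ v₀ + M₀₁ v₁)² + det M · v₁²`
  rcases h0.eq_or_lt with h0 | h0
  · have : M 0 1 = 0 := by nlinarith [sq_nonneg (M 0 1)]
    simp only [this, ← h0]
    nlinarith [sq_nonneg (v 1)]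
  · nlinarith [sq_nonneg (M 0 0 * v 0 + M 0 1 * v 1), mul_nonneg hdet (sq_nonneg (v 1))]

lemma Matrix.trace_sq_sub_four_mul_det {M : Matrix (Fin 2) (Fin 2) ℝ} (hM : M.IsHermitian) :
    M.trace ^ 2 - 4 * M.det = (M 0 0 - M 1 1) ^ 2 + 4 * M 0 1 ^ 2 := by
  rw [trace_fin_two, det_fin_two, hM.apply_one_zero]
  ring

lemma mul_add_mul_add_mul_sqrt_le (α β γ x y : ℝ) (hxy : x ^ 2 + y ^ 2 ≤ 1 / 4) :
    α * x + β * y + γ * √(1 / 4 - x ^ 2 - y ^ 2) ≤ √(α ^ 2 + β ^ 2 + γ ^ 2) / 2 := by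
  set z := √(1 / 4 - x ^ 2 - y ^ 2)
  have hz : z ^ 2 = 1 / 4 - x ^ 2 - y ^ 2 := Real.sq_sqrt (by linarith)
  -- Cauchy–Schwarz in `ℝ³` against `(x, y, z)`, a point of the sphere of radius `1 / 2`
  have hcs : (2 * (α * x + β * y + γ * z)) ^ 2 ≤ α ^ 2 + β ^ 2 + γ ^ 2 := by
    nlinarith [sq_nonneg (α * y - β * x), sq_nonneg (α * z - γ * x), sq_nonneg (β * z - γ * y)]
  linarith [le_abs_self (2 * (α * x + β * y + γ * z)), Real.abs_le_sqrt hcs]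

lemma exists_mul_add_mul_add_mul_sqrt_eq (α β γ : ℝ) (hγ : 0 ≤ γ) :
    ∃ x y : ℝ, x ^ 2 + y ^ 2 ≤ 1 / 4 ∧
      α * x + β * y + γ * √(1 / 4 - x ^ 2 - y ^ 2) = √(α ^ 2 + β ^ 2 + γ ^ 2) / 2 := by
  set R := √(α ^ 2 + β ^ 2 + γ ^ 2)
  have hR2 : R ^ 2 = α ^ 2 + β ^ 2 + γ ^ 2 := Real.sq_sqrt (by positivity)
  have hR0 : 0 ≤ R := Real.sqrt_nonneg _
  rcases hR0.eq_or_lt with hR | hR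
  · have hα : α = 0 := by nlinarith [sq_nonneg α, sq_nonneg β, sq_nonneg γ]
    have hβ : β = 0 := by nlinarith [sq_nonneg α, sq_nonneg β, sq_nonneg γ]
    have hγ' : γ = 0 := by nlinarith [sq_nonneg α, sq_nonneg β, sq_nonneg γ]
    exact ⟨0, 0, by norm_num, by simp [hα, hβ, hγ', ← hR]⟩
  · -- the equality case of Cauchy–Schwarz: `(x, y, z) = (α, β, γ) / (2 R)`
    have hz : 1 / 4 - (α / (2 * R)) ^ 2 - (β / (2 * R)) ^ 2 = (γ / (2 * R)) ^ 2 := by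
      field_simp; linarith
    refine ⟨α / (2 * R), β / (2 * R), by nlinarith [sq_nonneg (γ / (2 * R))], ?_⟩
    rw [hz, Real.sqrt_sq (by positivity)]
    field_simp
    linarith

lemma mem_S1_iff {B : Matrix (Fin 2) (Fin 2) ℝ} :
    B ∈ S1 ↔ ∃ x y : ℝ, x ^ 2 + y ^ 2 ≤ 1 / 4 ∧ B = !![1 / 2 + x, y; y, 1 / 2 - x] := by
  constructor
  · rintro ⟨hB, htr⟩
    have hB10 := hB.isHermitian.apply_one_zero
    have hB11 : B 1 1 = 1 - B 0 0 := by rw [trace_fin_two] at htr; linarith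
    have hdet := hB.det_nonneg
    rw [det_fin_two, hB10, hB11] at hdet
    refine ⟨B 0 0 - 1 / 2, B 0 1, by nlinarith, ?_⟩
    conv_lhs => rw [eta_fin_two B, hB10, hB11]
    ring_nf
  · rintro ⟨x, y, hxy, rfl⟩
    refine ⟨(posSemidef_fin_two_iff (isHermitian_fin_two_of _ _ _)).2 ⟨?_, ?_⟩, ?_⟩ <;>
      simp only [trace_fin_two_of, det_fin_two_of] <;> nlinarith

lemma frob_fin_two_of {A : Matrix (Fin 2) (Fin 2) ℝ} (hA : A.IsHermitian) (p q r : ℝ) :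
    frob !![p, q; q, r] A = p * A 0 0 + 2 * q * A 0 1 + r * A 1 1 := by
  rw [frob, trace_fin_two]
  simp [mul_apply, Fin.sum_univ_two, hA.apply_one_zero]
  ring

theorem Hop_eq {A : Matrix (Fin 2) (Fin 2) ℝ} (hA : A.IsHermitian) {f : ℝ} (hf : 0 ≤ f) :
    Hop A f = (√(A.trace ^ 2 - 4 * A.det + f ^ 2) - A.trace) / 2 := by
  have hdisc : A.trace ^ 2 - 4 * A.det + f ^ 2 =
      (A 1 1 - A 0 0) ^ 2 + (-2 * A 0 1) ^ 2 + f ^ 2 := by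
    rw [trace_sq_sub_four_mul_det hA]; ring
  have hvalue (x y : ℝ) : -frob !![1 / 2 + x, y; y, 1 / 2 - x] A +
      f * √(det !![1 / 2 + x, y; y, 1 / 2 - x]) = -A.trace / 2 +
        ((A 1 1 - A 0 0) * x + (-2 * A 0 1) * y + f * √(1 / 4 - x ^ 2 - y ^ 2)) := by
    rw [frob_fin_two_of hA, det_fin_two_of, trace_fin_two]
    ring_nf
  rw [hdisc]
  refine IsGreatest.csSup_eq ⟨?_, ?_⟩
  · obtain ⟨x, y, hxy, hmax⟩ :=
      exists_mul_add_mul_add_mul_sqrt_eq (A 1 1 - A 0 0) (-2 * A 0 1) f hf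
    exact ⟨_, mem_S1_iff.2 ⟨x, y, hxy, rfl⟩, by dsimp only; rw [hvalue, hmax]; ring⟩
  · rintro _ ⟨B, hB, rfl⟩
    obtain ⟨x, y, hxy, rfl⟩ := mem_S1_iff.1 hB
    dsimp only
    rw [hvalue]
    linarith [mul_add_mul_add_mul_sqrt_le (A 1 1 - A 0 0) (-2 * A 0 1) f x y hxy]

theorem stmt7 (A : Matrix (Fin 2) (Fin 2) ℝ) (hA : A.IsHermitian) (f : ℝ) (hf : 0 ≤ f) :
    Hop A f = 0 ↔ A.PosSemidef ∧ A.det = (f / 2) ^ 2 := by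
  have hdisc : 0 ≤ A.trace ^ 2 - 4 * A.det + f ^ 2 := by
    rw [trace_sq_sub_four_mul_det hA]; positivity
  rw [Hop_eq hA hf, posSemidef_fin_two_iff hA, div_eq_zero_iff, sub_eq_zero, Real.sqrt_eq_cases]
  simp only [hdisc.not_gt, false_and, or_false, two_ne_zero]
  constructor
  · rintro ⟨hsq, htr⟩
    exact ⟨⟨htr, by nlinarith⟩, by linarith⟩
  · rintro ⟨⟨htr, -⟩, hdet⟩
    exact ⟨by rw [hdet]; ring, htr⟩
end
end

section
/- Let u: Ω → ℝ be twice continuously differentiable on an open set Ω ⊂ ℝ², and let f: Ω → ℝ be nonnegative. Then u satisfies H(D²u(x), f(x)) = 0 for all x ∈ Ω if and only if D²u(x) is positive semidefinite and det D²u(x) = (f(x)/2)² for all x ∈ Ω. -/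
open Matrix

noncomputable section

noncomputable def HessWithin (u : (Fin 2 → ℝ) → ℝ) (Ω : Set (Fin 2 → ℝ))
    (x : Fin 2 → ℝ) : Matrix (Fin 2) (Fin 2) ℝ :=
  fun i j => iteratedFDerivWithin ℝ 2 u Ω x ![Pi.single i 1, Pi.single j 1]

/-!
For positive semidefinite `2 × 2` matrices, `tr(BA) ≥ 2 √(det A) √(det B)` (AM-GM for the
eigenvalues of `√B A √B`). So if `A ⪰ 0` and `2 √(det A) = f`, every `B ∈ S₁` gives a value `≤ 0`,
and `B = adj A / tr A` gives exactly `0`. Conversely, if `H(A, f) = 0`, testing against rank-one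
`B` shows `A ⪰ 0`; testing against `adj (A + δ) / tr (A + δ)` gives `f ≤ 2 √(det (A + δ))` for all
`δ > 0`; and if `det A > (f / 2) ^ 2`, the bounds `tr(BA) ≥ det A / tr A` and AM-GM keep every
value below a fixed negative number. Hessians of `C²` functions are symmetric, so this applies
pointwise.
-/

namespace Matrix

variable {A B : Matrix (Fin 2) (Fin 2) ℝ}

lemma isHermitian_fin_two_iff : A.IsHermitian ↔ A 1 0 = A 0 1 := by
  constructor
  · intro h; simpa using congrFun (congrFun h 0) 1
  · intro h
    refine IsHermitian.ext fun i j => ?_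
    fin_cases i <;> fin_cases j <;> simp [h]

lemma det_add_smul_one_fin_two (A : Matrix (Fin 2) (Fin 2) ℝ) (t : ℝ) :
    (A + t • 1).det = A.det + t * A.trace + t ^ 2 := by
  simp [det_fin_two, trace_fin_two]; ring

lemma trace_add_smul_one_fin_two (A : Matrix (Fin 2) (Fin 2) ℝ) (t : ℝ) :
    (A + t • 1).trace = A.trace + 2 * t := by
  simp [trace_fin_two]; ring

lemma four_mul_det_le_trace_sq_fin_two (hA : A.IsHermitian) : 4 * A.det ≤ A.trace ^ 2 := by
  rw [isHermitian_fin_two_iff] at hA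
  rw [det_fin_two, trace_fin_two, hA]
  nlinarith [sq_nonneg (A 0 0 - A 1 1), sq_nonneg (A 0 1)]

lemma det_vecMulVec_fin_two (x y : Fin 2 → ℝ) : (vecMulVec x y).det = 0 := by
  rw [det_fin_two]; simp only [vecMulVec_apply]; ring

lemma posSemidef_fin_two_iff_s12 : A.PosSemidef ↔ A.IsHermitian ∧ 0 ≤ A.det ∧ 0 ≤ A.trace := by
  refine ⟨fun h => ⟨h.isHermitian, h.det_nonneg, h.trace_nonneg⟩, ?_⟩
  rintro ⟨hA, hdet, htr⟩
  refine .of_dotProduct_mulVec_nonneg hA fun x => ?_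
  have hsym := isHermitian_fin_two_iff.1 hA
  rw [det_fin_two, hsym] at hdet
  rw [trace_fin_two] at htr
  have h00 : 0 ≤ A 0 0 := by nlinarith [sq_nonneg (A 0 1)]
  simp only [dotProduct, mulVec, Fin.sum_univ_two, hsym, star_trivial]
  rcases h00.eq_or_lt with h0 | h0
  · have : A 0 1 = 0 := by nlinarith [sq_nonneg (A 0 1)]
    simp only [← h0, this]; nlinarith [sq_nonneg (x 1)]
  · nlinarith [sq_nonneg (A 0 0 * x 0 + A 0 1 * x 1), mul_nonneg hdet (sq_nonneg (x 1))]

lemma PosSemidef.two_mul_sqrt_det_mul_le_trace_mul (hA : A.PosSemidef) (hB : B.PosSemidef) :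
    2 * (√A.det * √B.det) ≤ (B * A).trace := by
  obtain ⟨L, rfl⟩ : ∃ L : Matrix (Fin 2) (Fin 2) ℝ, B = Lᴴ * L := by
    open scoped MatrixOrder in exact CStarAlgebra.nonneg_iff_eq_star_mul_self.mp hB.nonneg
  have hC : (L * A * Lᴴ).PosSemidef := hA.mul_mul_conjTranspose_same L
  have htr : (Lᴴ * L * A).trace = (L * A * Lᴴ).trace := by
    rw [mul_assoc, trace_mul_comm, mul_assoc]
  have hdet : A.det * (Lᴴ * L).det = (L * A * Lᴴ).det := by
    simp only [det_mul, det_conjTranspose, star_trivial]; ring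
  rw [htr, ← Real.sqrt_mul hA.det_nonneg, hdet]
  nlinarith [Real.sq_sqrt hC.det_nonneg, Real.sqrt_nonneg (L * A * Lᴴ).det, hC.trace_nonneg,
    four_mul_det_le_trace_sq_fin_two hC.isHermitian]

lemma PosSemidef.trace_mul_nonneg_fin_two (hA : A.PosSemidef) (hB : B.PosSemidef) :
    0 ≤ (B * A).trace :=
  (hA.two_mul_sqrt_det_mul_le_trace_mul hB).trans' (by positivity)

end Matrix

section

open Filter Topology

variable {A B : Matrix (Fin 2) (Fin 2) ℝ} {f c : ℝ}

lemma mem_S1_iff_s12 : B ∈ S1 ↔ B.IsHermitian ∧ 0 ≤ B.det ∧ B.trace = 1 := by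
  simp only [S1, Set.mem_ofPred_eq, posSemidef_fin_two_iff_s12]
  exact ⟨fun ⟨⟨hB, hdet, _⟩, htr⟩ => ⟨hB, hdet, htr⟩,
    fun ⟨hB, hdet, htr⟩ => ⟨⟨hB, hdet, htr.ge.trans' zero_le_one⟩, htr⟩⟩

lemma sqrt_det_le_half_of_mem_S1 (hB : B ∈ S1) : √B.det ≤ 1 / 2 := by
  have := four_mul_det_le_trace_sq_fin_two hB.1.isHermitian
  rw [hB.2] at this
  exact Real.sqrt_le_iff.2 ⟨by norm_num, by linarith⟩

lemma half_smul_one_mem_S1 : (1 / 2 : ℝ) • (1 : Matrix (Fin 2) (Fin 2) ℝ) ∈ S1 := by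
  rw [mem_S1_iff_s12, isHermitian_fin_two_iff]
  norm_num [det_fin_two, trace_fin_two]

lemma inv_dotProduct_smul_vecMulVec_mem_S1 {x : Fin 2 → ℝ} (hx : x ≠ 0) :
    (x ⬝ᵥ x)⁻¹ • vecMulVec x x ∈ S1 := by
  have hpos : 0 < x ⬝ᵥ x := by simpa using dotProduct_self_star_pos_iff.2 hx
  rw [mem_S1_iff_s12, isHermitian_fin_two_iff]
  refine ⟨by simp [vecMulVec_apply, mul_comm], by rw [det_smul, det_vecMulVec_fin_two, mul_zero], ?_⟩
  rw [trace_smul, trace_vecMulVec, smul_eq_mul, inv_mul_cancel₀ hpos.ne']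

lemma inv_trace_smul_adjugate_mem_S1 (hA : A.PosSemidef) (hT : 0 < A.trace) :
    A.trace⁻¹ • A.adjugate ∈ S1 := by
  refine mem_S1_iff_s12.2 ⟨(IsHermitian.adjugate hA.isHermitian).smul (.all _), ?_, ?_⟩
  · simpa [det_adjugate] using mul_nonneg (sq_nonneg A.trace⁻¹) hA.det_nonneg
  · have : A.adjugate.trace = A.trace := by simp [adjugate_fin_two, trace_fin_two, add_comm]
    rw [trace_smul, this, smul_eq_mul, inv_mul_cancel₀ hT.ne']

lemma frob_inv_trace_smul_adjugate (A : Matrix (Fin 2) (Fin 2) ℝ) :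
    frob (A.trace⁻¹ • A.adjugate) A = 2 * A.det / A.trace := by
  simp [frob, adjugate_mul, trace_smul]; ring

lemma det_inv_trace_smul_adjugate (A : Matrix (Fin 2) (Fin 2) ℝ) :
    (A.trace⁻¹ • A.adjugate).det = A.det / A.trace ^ 2 := by
  simp [det_adjugate]; ring

lemma frob_add_smul_one (A B : Matrix (Fin 2) (Fin 2) ℝ) (t : ℝ) :
    frob B (A + t • 1) = frob B A + t * B.trace := by
  simp [frob, mul_add, trace_add, trace_smul]

lemma bddAbove_hop_image (hA : A.IsHermitian) (f : ℝ) :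
    BddAbove ((fun B => -frob B A + f * √B.det) '' S1) := by
  obtain ⟨t, ht⟩ : ∃ t : ℝ, t = |A.trace| + |A.det| + 1 := ⟨_, rfl⟩
  have hshift : (A + t • 1).PosSemidef := by
    refine posSemidef_fin_two_iff_s12.2 ⟨hA.add (isHermitian_one.smul (.all _)), ?_, ?_⟩
    · rw [det_add_smul_one_fin_two]
      nlinarith [le_abs_self A.trace, neg_abs_le A.trace, neg_abs_le A.det, abs_nonneg A.det]
    · rw [trace_add_smul_one_fin_two]
      linarith [abs_nonneg A.trace, neg_abs_le A.trace, abs_nonneg A.det]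
  refine ⟨t + |f|, Set.forall_mem_image.2 fun B hB => ?_⟩
  have hfrob := hshift.trace_mul_nonneg_fin_two hB.1
  have hsqrt : f * √B.det ≤ |f| := calc
    f * √B.det ≤ |f| * (1 / 2) :=
      mul_le_mul (le_abs_self f) (sqrt_det_le_half_of_mem_S1 hB) (Real.sqrt_nonneg _) (abs_nonneg f)
    _ ≤ |f| := by linarith [abs_nonneg f]
  rw [← frob, frob_add_smul_one, hB.2] at hfrob
  linarith

lemma hop_le_iff (hA : A.IsHermitian) : Hop A f ≤ c ↔ ∀ B ∈ S1, -frob B A + f * √B.det ≤ c :=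
  (csSup_le_iff (bddAbove_hop_image hA f) ⟨_, Set.mem_image_of_mem _ half_smul_one_mem_S1⟩).trans
    Set.forall_mem_image

lemma le_hop (hA : A.IsHermitian) {B : Matrix (Fin 2) (Fin 2) ℝ} (hB : B ∈ S1) :
    -frob B A + f * √B.det ≤ Hop A f :=
  le_csSup (bddAbove_hop_image hA f) (Set.mem_image_of_mem _ hB)

lemma posSemidef_of_hop_nonpos (hA : A.IsHermitian) (h : Hop A f ≤ 0) : A.PosSemidef := by
  refine .of_dotProduct_mulVec_nonneg hA fun x => ?_
  rcases eq_or_ne x 0 with rfl | hx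
  · simp
  have hpos : 0 < x ⬝ᵥ x := by simpa using dotProduct_self_star_pos_iff.2 hx
  have hB := (hop_le_iff hA).1 h _ (inv_dotProduct_smul_vecMulVec_mem_S1 hx)
  have hdet : ((x ⬝ᵥ x)⁻¹ • vecMulVec x x).det = 0 := by
    rw [det_smul, det_vecMulVec_fin_two, mul_zero]
  have hfrob : frob ((x ⬝ᵥ x)⁻¹ • vecMulVec x x) A = (x ⬝ᵥ x)⁻¹ * (star x ⬝ᵥ A *ᵥ x) := by
    simp only [frob, smul_mul, trace_smul, smul_eq_mul, trace_fin_two, mul_apply, vecMulVec_apply,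
      dotProduct, mulVec, Fin.sum_univ_two, star_trivial]
    ring
  rw [hdet, hfrob, Real.sqrt_zero, mul_zero, add_zero, neg_nonpos] at hB
  exact nonneg_of_mul_nonneg_right hB (inv_pos.2 hpos)

lemma sq_half_le_det_of_hop_nonpos (hA : A.PosSemidef) (hf : 0 ≤ f) (h : Hop A f ≤ 0) :
    (f / 2) ^ 2 ≤ A.det := by
  have hshift : ∀ δ > 0, (f / 2) ^ 2 ≤ A.det + δ * A.trace + δ ^ 2 := by
    intro δ hδ
    rw [← det_add_smul_one_fin_two]
    set Aδ := A + δ • 1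
    have hdet : 0 < Aδ.det := by
      rw [det_add_smul_one_fin_two]
      nlinarith [hA.det_nonneg, hA.trace_nonneg]
    have htr : 0 < Aδ.trace := by
      rw [trace_add_smul_one_fin_two]
      linarith [hA.trace_nonneg]
    have hB := inv_trace_smul_adjugate_mem_S1 (hA.add (PosSemidef.one.smul hδ.le)) htr
    have hval := (hop_le_iff hA.isHermitian).1 h _ hB
    have hfrob := frob_add_smul_one A (Aδ.trace⁻¹ • Aδ.adjugate) δ
    rw [frob_inv_trace_smul_adjugate, hB.2] at hfrob
    rw [det_inv_trace_smul_adjugate, Real.sqrt_div' _ (sq_nonneg _), Real.sqrt_sq htr.le] at hval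
    have hle : f * √Aδ.det ≤ 2 * Aδ.det := by
      have : f * √Aδ.det / Aδ.trace ≤ 2 * Aδ.det / Aδ.trace := by
        rw [mul_div_assoc]; linarith
      rwa [div_le_div_iff_of_pos_right htr] at this
    have hsqrt := Real.sq_sqrt hdet.le
    have : f ≤ 2 * √Aδ.det := by nlinarith [Real.sqrt_pos.2 hdet]
    nlinarith
  have hlim : Tendsto (fun δ : ℝ => A.det + δ * A.trace + δ ^ 2) (𝓝[>] 0) (𝓝 A.det) := by
    have hcont : Continuous fun δ : ℝ => A.det + δ * A.trace + δ ^ 2 := by fun_prop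
    simpa using (hcont.tendsto 0).mono_left nhdsWithin_le_nhds
  exact ge_of_tendsto hlim (eventually_nhdsWithin_of_forall hshift)

lemma hop_neg_of_sq_half_lt_det (hA : A.PosSemidef) (hf : 0 ≤ f) (hlt : (f / 2) ^ 2 < A.det) :
    Hop A f < 0 := by
  have hdet : 0 < A.det := hlt.trans_le' (sq_nonneg _)
  have h4 := four_mul_det_le_trace_sq_fin_two hA.isHermitian
  have htr : 0 < A.trace := by nlinarith [hA.trace_nonneg]
  set μ := A.det / A.trace
  have hμ : 0 < μ := div_pos hdet htr
  have hμT : μ * A.trace = A.det := div_mul_cancel₀ _ htr.ne'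
  -- `μ = det A / tr A` is at most the smallest eigenvalue of `A`
  have hshift : (A + (-μ) • 1).PosSemidef := by
    refine posSemidef_fin_two_iff_s12.2 ⟨hA.isHermitian.add (isHermitian_one.smul (.all _)), ?_, ?_⟩
    · rw [det_add_smul_one_fin_two]; nlinarith
    · rw [trace_add_smul_one_fin_two]
      nlinarith
  have hfrob_ge : ∀ B ∈ S1, μ ≤ frob B A := fun B hB => by
    have := hshift.trace_mul_nonneg_fin_two hB.1
    rw [← frob, frob_add_smul_one, hB.2] at this
    linarith
  set s := √A.det
  have hs : 0 < s := Real.sqrt_pos.2 hdet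
  have hfs : f < 2 * s := by nlinarith [Real.sq_sqrt hdet.le]
  set κ := f / (2 * s)
  have hκ : κ < 1 := (div_lt_one (by positivity)).2 hfs
  -- by AM-GM, `f √(det B) ≤ κ tr(BA)`, so each value is at most `-(1 - κ) tr(BA) ≤ -(1 - κ) μ`
  suffices Hop A f ≤ -((1 - κ) * μ) by nlinarith
  refine (hop_le_iff hA.isHermitian).2 fun B hB => ?_
  have hAM := hA.two_mul_sqrt_det_mul_le_trace_mul hB.1
  have : f * √B.det = κ * (2 * (s * √B.det)) := by
    simp only [κ]; field_simp
  rw [← frob] at hAM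
  nlinarith [hfrob_ge B hB, div_nonneg hf (by positivity : (0 : ℝ) ≤ 2 * s)]

lemma hop_eq_zero_of_det_eq (hA : A.PosSemidef) (hf : 0 ≤ f) (hdet : A.det = (f / 2) ^ 2) :
    Hop A f = 0 := by
  have hsqrt : √A.det = f / 2 := by rw [hdet, Real.sqrt_sq (by linarith)]
  refine le_antisymm ((hop_le_iff hA.isHermitian).2 fun B hB => ?_) ?_
  · have := hA.two_mul_sqrt_det_mul_le_trace_mul hB.1
    rw [hsqrt, ← frob] at this
    linarith
  rcases hA.trace_nonneg.eq_or_lt with htr | htr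
  · have h4 := four_mul_det_le_trace_sq_fin_two hA.isHermitian
    rw [← htr, hdet] at h4
    have hf0 : f = 0 := by nlinarith
    refine (le_hop hA.isHermitian half_smul_one_mem_S1).trans_eq' ?_
    simp [frob, trace_smul, ← htr, hf0]
  · refine (le_hop hA.isHermitian (inv_trace_smul_adjugate_mem_S1 hA htr)).trans_eq' ?_
    rw [frob_inv_trace_smul_adjugate, det_inv_trace_smul_adjugate, Real.sqrt_div' _ (sq_nonneg _),
      Real.sqrt_sq htr.le, hsqrt, hdet]
    field_simp
    ring

lemma hop_eq_zero_iff (hA : A.IsHermitian) (hf : 0 ≤ f) :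
    Hop A f = 0 ↔ A.PosSemidef ∧ A.det = (f / 2) ^ 2 := by
  refine ⟨fun h => ?_, fun ⟨hpsd, hdet⟩ => hop_eq_zero_of_det_eq hpsd hf hdet⟩
  have hpsd := posSemidef_of_hop_nonpos hA h.le
  refine ⟨hpsd, le_antisymm (not_lt.1 fun hlt => ?_) (sq_half_le_det_of_hop_nonpos hpsd hf h.le)⟩
  exact (hop_neg_of_sq_half_lt_det hpsd hf hlt).ne h

end

lemma isHermitian_hessWithin {Ω : Set (Fin 2 → ℝ)} (hΩ : IsOpen Ω) {u : (Fin 2 → ℝ) → ℝ}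
    (hu : ContDiffOn ℝ 2 u Ω) {x : Fin 2 → ℝ} (hx : x ∈ Ω) : (HessWithin u Ω x).IsHermitian := by
  have hfderiv : ∀ i j : Fin 2, HessWithin u Ω x i j
      = fderiv ℝ (fderiv ℝ u) x (Pi.single i 1) (Pi.single j 1) := fun i j => by
    simp [HessWithin, iteratedFDerivWithin_of_isOpen 2 hΩ hx, iteratedFDeriv_two_apply]
  have hsymm : IsSymmSndFDerivAt ℝ u x :=
    (hu.contDiffAt (hΩ.mem_nhds hx)).isSymmSndFDerivAt (by simp)
  exact IsHermitian.ext fun i j => by simp only [star_trivial, hfderiv, hsymm _ _]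

theorem stmt12 (Ω : Set (Fin 2 → ℝ)) (hΩ : IsOpen Ω)
    (u f : (Fin 2 → ℝ) → ℝ) (hu : ContDiffOn ℝ 2 u Ω)
    (hf : ∀ x ∈ Ω, 0 ≤ f x) :
    (∀ x ∈ Ω, Hop (HessWithin u Ω x) (f x) = 0) ↔
      (∀ x ∈ Ω, (HessWithin u Ω x).PosSemidef ∧
        (HessWithin u Ω x).det = (f x / 2) ^ 2) :=
  forall₂_congr fun x hx => hop_eq_zero_iff (isHermitian_hessWithin hΩ hu hx) (hf x hx)
end
end
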